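/- Let s, t, p be nonzero real numbers with 0 < s < t, and suppose p ≥ max(2s, (2/3)(s+t)), with the strict inequality p > 2s required in case t = 2s. Then for all positive real numbers a ≠ b, 2^{p/t − p/s} < (M_s(a,b)^p − G(a,b)^p)/(M_t(a,b)^p − G(a,b)^p) < s/t. -/

import Mathlib

/-- The power mean of order `r` of `a` and `b`. -/
noncomputable def powerMean (r a b : ℝ) : ℝ := ((a ^ r + b ^ r) / 2) ^ (1 / r)

/-- The geometric mean of `a` and `b`. -/
noncomputable def geomMean (a b : ℝ) : ℝ := Real.sqrt (a * b)

/-!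
Writing `a = m e^y`, `b = m e^{-y}` gives `M_r(a, b)^p = m^p cosh(r y)^{p/r}` and `G(a, b) = m`, so
the ratio is `(cosh(s y)^{p/s} - 1) / (cosh(t y)^{p/t} - 1)`. Both bounds follow by comparing
derivatives in `y`, i.e. from pointwise bounds on `cosh(r x)^{p/r - 1} sinh(r x)` for `r = s, t`.
With `u = e^{-2sx}`, `l = t/s`, `α = p/s` and after taking logarithms, these say that
`profileGap l α u = log((1 - u^l)(1 + u^l)^{α/l - 1}) - log((1 - u)(1 + u)^{α - 1})` lies strictly
between its limit `log l + (α/l - α) log 2` at `u = 1` and its value `0` at `u = 0`, which holds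
because it is strictly decreasing on `[0, 1)`. With `u = e^{-θ}` the sign of its derivative comes
down to inequalities between `sinh θ`, `sinh((l - 1)θ)` and `sinh(lθ)`.
-/

open Real Set Filter Topology

lemma lt_of_hasDerivAt_lt {f g f' g' : ℝ → ℝ} {a b : ℝ} (hab : a < b)
    (hf : ∀ x, HasDerivAt f (f' x) x) (hg : ∀ x, HasDerivAt g (g' x) x)
    (hfg' : ∀ x ∈ Ioo a b, f' x < g' x) (hfg : f a ≤ g a) : f b < g b := by
  have hmono : StrictMonoOn (g - f) (Icc a b) := by
    refine strictMonoOn_of_hasDerivWithinAt_pos (f' := g' - f') (convex_Icc a b)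
      (fun x _ ↦ ((hg x).sub (hf x)).continuousAt.continuousWithinAt) (fun x _ ↦ ?_) ?_
    · exact ((hg x).sub (hf x)).hasDerivWithinAt
    · rw [interior_Icc]; exact fun x hx ↦ sub_pos.2 (hfg' x hx)
  have := hmono (left_mem_Icc.2 hab.le) (right_mem_Icc.2 hab.le) hab
  simp only [Pi.sub_apply] at this
  linarith

/-- `e^{-x}(f' + f)` and then `e^x f` are increasing. -/
lemma pos_of_lt_second_deriv {f f' f'' : ℝ → ℝ} (hf : ∀ x, HasDerivAt f (f' x) x)
    (hf' : ∀ x, HasDerivAt f' (f'' x) x) (h0 : f 0 = 0) (h0' : f' 0 = 0)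
    (hlt : ∀ x, 0 < x → f x < f'' x) {x : ℝ} (hx : 0 < x) : 0 < f x := by
  have hsum : ∀ y, 0 < y → 0 < f' y + f y := by
    intro y hy
    have hE : ∀ z, HasDerivAt (fun z ↦ exp (-z) * (f' z + f z))
        (exp (-z) * (f'' z - f z)) z := fun z ↦
      ((hasDerivAt_neg z).exp.mul ((hf' z).add (hf z))).congr_deriv
        (by simp only [Pi.add_apply]; ring)
    have := lt_of_hasDerivAt_lt hy (fun z ↦ hasDerivAt_const z 0) hE
      (fun z hz ↦ mul_pos (exp_pos _) (sub_pos.2 (hlt z hz.1))) (by simp [h0, h0'])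
    exact pos_of_mul_pos_right this (exp_pos _).le
  have hK : ∀ z, HasDerivAt (fun z ↦ exp z * f z) (exp z * (f' z + f z)) z := fun z ↦
    ((hasDerivAt_exp z).mul (hf z)).congr_deriv (by ring)
  have := lt_of_hasDerivAt_lt hx (fun z ↦ hasDerivAt_const z 0) hK
    (fun z hz ↦ mul_pos (exp_pos _) (hsum z hz.1)) (by simp [h0])
  exact pos_of_mul_pos_right this (exp_pos _).le

lemma hasDerivAt_sinh_mul (k x : ℝ) :
    HasDerivAt (fun x ↦ sinh (k * x)) (k * cosh (k * x)) x := by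
  simpa [mul_comm] using ((hasDerivAt_id x).const_mul k).sinh

lemma hasDerivAt_cosh_mul (k x : ℝ) :
    HasDerivAt (fun x ↦ cosh (k * x)) (k * sinh (k * x)) x := by
  simpa [mul_comm] using ((hasDerivAt_id x).const_mul k).cosh

lemma sinh_mul_lt_mul_sinh {μ θ : ℝ} (hμ0 : 0 < μ) (hμ1 : μ < 1) (hθ : 0 < θ) :
    sinh (μ * θ) < μ * sinh θ := by
  refine lt_of_hasDerivAt_lt hθ (hasDerivAt_sinh_mul μ) (fun x ↦ (hasDerivAt_sinh x).const_mul μ)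
    (fun x hx ↦ mul_lt_mul_of_pos_left ?_ hμ0) (by simp)
  rw [cosh_lt_cosh, abs_of_pos (mul_pos hμ0 hx.1), abs_of_pos hx.1]
  exact mul_lt_of_lt_one_left hx.1 hμ1

/-- The difference `J` of the two sides satisfies `J(0) = J'(0) = 0` and `J'' > J`. -/
lemma mul_sinh_sub_one_mul_lt {l θ : ℝ} (hl : 2 < l) (hθ : 0 < θ) :
    (l + 1) * sinh ((l - 1) * θ) < (l - 2) * sinh (l * θ) + (2 * l - 1) * sinh θ := by
  let J : ℝ → ℝ := fun x ↦ (l - 2) * sinh (l * x) + (2 * l - 1) * sinh x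
    - (l + 1) * sinh ((l - 1) * x)
  let J' : ℝ → ℝ := fun x ↦ (l - 2) * (l * cosh (l * x)) + (2 * l - 1) * cosh x
    - (l + 1) * ((l - 1) * cosh ((l - 1) * x))
  let J'' : ℝ → ℝ := fun x ↦ (l - 2) * (l * (l * sinh (l * x))) + (2 * l - 1) * sinh x
    - (l + 1) * ((l - 1) * ((l - 1) * sinh ((l - 1) * x)))
  have hJ : ∀ x, HasDerivAt J (J' x) x := fun x ↦
    (((hasDerivAt_sinh_mul l x).const_mul _).add ((hasDerivAt_sinh x).const_mul _)).sub
      ((hasDerivAt_sinh_mul (l - 1) x).const_mul _)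
  have hJ' : ∀ x, HasDerivAt J' (J'' x) x := fun x ↦
    ((((hasDerivAt_cosh_mul l x).const_mul _).const_mul _).add
      ((hasDerivAt_cosh x).const_mul _)).sub
      (((hasDerivAt_cosh_mul (l - 1) x).const_mul _).const_mul _)
  have hlt : ∀ x, 0 < x → J x < J'' x := by
    intro x hx
    have hl0 : 0 < l := by linarith
    have hμ := sinh_mul_lt_mul_sinh (μ := (l - 1) / l) (div_pos (by linarith) hl0)
      ((div_lt_one hl0).2 (by linarith)) (mul_pos hl0 hx)
    rw [show (l - 1) / l * (l * x) = (l - 1) * x by field_simp, div_mul_eq_mul_div,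
      lt_div_iff₀ hl0] at hμ
    have hJ''J : J'' x - J x
        = (l + 1) * (l - 2) * ((l - 1) * sinh (l * x) - l * sinh ((l - 1) * x)) := by
      simp only [J, J'']; ring
    have := mul_pos (mul_pos (by linarith : (0 : ℝ) < l + 1) (by linarith : (0 : ℝ) < l - 2))
      (sub_pos.2 (by linarith : l * sinh ((l - 1) * x) < (l - 1) * sinh (l * x)))
    linarith
  have := pos_of_lt_second_deriv hJ hJ' (by simp [J]) (by simp [J']; ring) hlt hθ
  simp only [J] at this
  linarith

/-- With `u = e^{-θ}` both sides are combinations of `sinh θ`, `sinh ((l - 1)θ)`, `sinh (lθ)`;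
the case `l ≤ 2` reduces to `sinh_mul_lt_mul_sinh`, the case `2 < l` to
`mul_sinh_sub_one_mul_lt`. -/
lemma profileGap_deriv_num_lt {l α u : ℝ} (hl : 1 < l) (hα2 : 2 ≤ α) (hα3 : 2 * (1 + l) / 3 ≤ α)
    (hα : l = 2 → 2 < α) (hu0 : 0 < u) (hu1 : u < 1) :
    2 * (1 - (u ^ (l - 1) * u) ^ 2) - 2 * l * u ^ (l - 1) * (1 - u ^ 2)
      < α * ((1 - u) * (1 - u ^ (l - 1) * u) * (1 - u ^ (l - 1))) := by
  set θ := -log u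
  have hθ : 0 < θ := neg_pos.2 (log_neg hu0 hu1)
  have hA0 : 0 < u ^ (l - 1) := rpow_pos_of_pos hu0 _
  have hA1 : u ^ (l - 1) < 1 := rpow_lt_one hu0.le hu1 (by linarith)
  have hD : 0 < (1 - u) * (1 - u ^ (l - 1) * u) * (1 - u ^ (l - 1)) := by
    have : u ^ (l - 1) * u < 1 := by nlinarith
    apply mul_pos (mul_pos _ _) <;> linarith
  have hu : u = (exp θ)⁻¹ := by rw [← exp_neg, neg_neg, exp_log hu0]
  have hA : u ^ (l - 1) = (exp ((l - 1) * θ))⁻¹ := by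
    rw [rpow_def_of_pos hu0, ← exp_neg]; congr 1; ring
  have hsmall : 2 * ((1 - u) * (1 - u ^ (l - 1) * u) * (1 - u ^ (l - 1)))
      - (2 * (1 - (u ^ (l - 1) * u) ^ 2) - 2 * l * u ^ (l - 1) * (1 - u ^ 2))
      = 4 * u ^ (l - 1) * u * ((l - 1) * sinh θ - sinh ((l - 1) * θ)) := by
    simp only [sinh_eq, exp_neg]
    rw [hA, hu]
    field_simp
    ring
  have hlarge : 2 * (1 + l) / 3 * ((1 - u) * (1 - u ^ (l - 1) * u) * (1 - u ^ (l - 1)))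
      - (2 * (1 - (u ^ (l - 1) * u) ^ 2) - 2 * l * u ^ (l - 1) * (1 - u ^ 2))
      = 4 / 3 * u ^ (l - 1) * u * ((l - 2) * sinh (l * θ) + (2 * l - 1) * sinh θ
          - (l + 1) * sinh ((l - 1) * θ)) := by
    simp only [sinh_eq, exp_neg]
    rw [hA, hu, show l * θ = (l - 1) * θ + θ by ring, exp_add]
    field_simp
    ring
  rcases lt_trichotomy l 2 with hl2 | rfl | hl2
  · have := sinh_mul_lt_mul_sinh (by linarith) (by linarith) hθ (μ := l - 1)
    linarith [mul_nonneg (sub_nonneg.2 hα2) hD.le, mul_pos (mul_pos hA0 hu0) (sub_pos.2 this)]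
  · norm_num at hsmall hD ⊢
    linarith [mul_pos (sub_pos.2 (hα rfl)) hD]
  · linarith [mul_nonneg (sub_nonneg.2 hα3) hD.le,
      mul_pos (mul_pos hA0 hu0) (sub_pos.2 (mul_sinh_sub_one_mul_lt hl2 hθ))]

noncomputable def logProfile (β v : ℝ) : ℝ := log (1 - v) + (β - 1) * log (1 + v)

noncomputable def profileGap (l α v : ℝ) : ℝ := logProfile (α / l) (v ^ l) - logProfile α v

lemma hasDerivAt_logProfile (β : ℝ) {v : ℝ} (hv : v ∈ Ioo (-1) 1) :
    HasDerivAt (logProfile β) ((β - 1) / (1 + v) - 1 / (1 - v)) v := by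
  have h1 := ((hasDerivAt_id v).const_sub 1).log (by simp; linarith [hv.2])
  have h2 := ((hasDerivAt_id v).const_add 1).log (by simp; linarith [hv.1])
  exact (h1.add (h2.const_mul (β - 1))).congr_deriv (by simp; ring)

lemma hasDerivAt_profileGap (l α : ℝ) {v : ℝ} (hl : 0 < l) (hv : v ∈ Ioo 0 1) :
    HasDerivAt (profileGap l α)
      (l * v ^ (l - 1) * ((α / l - 1) / (1 + v ^ l) - 1 / (1 - v ^ l))
        - ((α - 1) / (1 + v) - 1 / (1 - v))) v := by
  have hw : v ^ l ∈ Ioo (-1) 1 :=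
    ⟨by linarith [rpow_pos_of_pos hv.1 l], rpow_lt_one hv.1.le hv.2 hl⟩
  have := ((hasDerivAt_logProfile (α / l) hw).comp v
    (hasDerivAt_rpow_const (Or.inl hv.1.ne'))).sub
    (hasDerivAt_logProfile α ⟨by linarith [hv.1], hv.2⟩)
  exact this.congr_deriv (by ring)

lemma profileGap_deriv_neg {l α v : ℝ} (hl : 1 < l) (hα2 : 2 ≤ α) (hα3 : 2 * (1 + l) / 3 ≤ α)
    (hα : l = 2 → 2 < α) (hv : v ∈ Ioo 0 1) :
    l * v ^ (l - 1) * ((α / l - 1) / (1 + v ^ l) - 1 / (1 - v ^ l))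
      - ((α - 1) / (1 + v) - 1 / (1 - v)) < 0 := by
  obtain ⟨hv0, hv1⟩ := hv
  have hvl : v ^ l = v ^ (l - 1) * v := by
    rw [← rpow_add_one hv0.ne', sub_add_cancel]
  have hw1 : v ^ l < 1 := rpow_lt_one hv0.le hv1 (by linarith)
  have hw0 : 0 < v ^ l := rpow_pos_of_pos hv0 l
  have hden : 0 < (1 - v ^ l) * (1 + v ^ l) * (1 - v) * (1 + v) := by
    apply mul_pos (mul_pos (mul_pos _ _) _) <;> linarith
  have key := profileGap_deriv_num_lt hl hα2 hα3 hα hv0 hv1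
  rw [← hvl] at key
  have hid : (l * v ^ (l - 1) * ((α / l - 1) / (1 + v ^ l) - 1 / (1 - v ^ l))
      - ((α - 1) / (1 + v) - 1 / (1 - v))) * ((1 - v ^ l) * (1 + v ^ l) * (1 - v) * (1 + v))
      = 2 * (1 - (v ^ l) ^ 2) - 2 * l * v ^ (l - 1) * (1 - v ^ 2)
        - α * ((1 - v) * (1 - v ^ l) * (1 - v ^ (l - 1))) := by
    have : l ≠ 0 := by positivity
    have : 1 - v ^ l ≠ 0 := by linarith
    have : 1 + v ^ l ≠ 0 := by linarith
    have : 1 - v ≠ 0 := by linarith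
    have : 1 + v ≠ 0 := by linarith
    field_simp
    rw [hvl]
    ring
  exact neg_of_mul_neg_right (by linarith) hden.le

lemma strictAntiOn_profileGap {l α : ℝ} (hl : 1 < l) (hα2 : 2 ≤ α)
    (hα3 : 2 * (1 + l) / 3 ≤ α) (hα : l = 2 → 2 < α) :
    StrictAntiOn (profileGap l α) (Ico 0 1) := by
  have hl0 : 0 < l := by linarith
  refine strictAntiOn_of_deriv_neg (convex_Ico 0 1) (fun v hv ↦ ?_) (fun v hv ↦ ?_)
  · have hw : v ^ l ∈ Ioo (-1) 1 :=
      ⟨by linarith [rpow_nonneg hv.1 l], rpow_lt_one hv.1 hv.2 hl0⟩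
    exact (((hasDerivAt_logProfile _ hw).continuousAt.comp (f := fun x ↦ x ^ l)
      (continuousAt_rpow_const v l (Or.inr hl0.le))).sub
      (hasDerivAt_logProfile α ⟨by linarith [hv.1], hv.2⟩).continuousAt).continuousWithinAt
  · rw [interior_Ico] at hv
    rw [(hasDerivAt_profileGap l α hl0 hv).deriv]
    exact profileGap_deriv_neg hl hα2 hα3 hα hv

lemma profileGap_zero {l : ℝ} (hl : l ≠ 0) (α : ℝ) : profileGap l α 0 = 0 := by
  simp [profileGap, logProfile, zero_rpow hl]

lemma tendsto_one_sub_rpow_div_one_sub {l : ℝ} :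
    Tendsto (fun v : ℝ ↦ (1 - v ^ l) / (1 - v)) (𝓝[<] 1) (𝓝 l) := by
  have hd := (hasDerivAt_rpow_const (x := 1) (p := l) (Or.inl one_ne_zero))
  rw [one_rpow, mul_one, hasDerivAt_iff_tendsto_slope] at hd
  refine (hd.mono_left (nhdsWithin_mono 1 fun x hx ↦ ne_of_lt hx)).congr' ?_
  filter_upwards [self_mem_nhdsWithin] with v hv
  rw [slope_def_field, one_rpow, ← neg_div_neg_eq, neg_sub, neg_sub]

lemma tendsto_profileGap {l : ℝ} (hl : 0 < l) (α : ℝ) :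
    Tendsto (profileGap l α) (𝓝[<] 1) (𝓝 (log l + (α / l - α) * log 2)) := by
  have hv : Tendsto (fun v : ℝ ↦ v) (𝓝[<] 1) (𝓝 1) := tendsto_nhdsWithin_of_tendsto_nhds tendsto_id
  have hvl : Tendsto (fun v : ℝ ↦ v ^ l) (𝓝[<] 1) (𝓝 1) := by
    simpa using hv.rpow_const (p := l) (Or.inl one_ne_zero)
  have hlim := ((tendsto_one_sub_rpow_div_one_sub.log hl.ne').add
    (((hvl.const_add 1).log (by norm_num)).const_mul (α / l - 1))).sub
    (((hv.const_add 1).log (by norm_num)).const_mul (α - 1))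
  rw [show log l + (α / l - 1) * log (1 + 1) - (α - 1) * log (1 + 1)
    = log l + (α / l - α) * log 2 by norm_num; ring] at hlim
  refine hlim.congr' ?_
  filter_upwards [Ioo_mem_nhdsLT (zero_lt_one' ℝ)] with v hv
  have hw : v ^ l < 1 := rpow_lt_one hv.1.le hv.2 hl
  rw [profileGap, logProfile, logProfile, log_div (by linarith) (by linarith [hv.2])]
  ring

lemma StrictAntiOn.lt_of_tendsto_nhdsLT {f : ℝ → ℝ} {a b L u : ℝ}
    (hf : StrictAntiOn f (Ico a b)) (hL : Tendsto f (𝓝[<] b) (𝓝 L)) (hu : u ∈ Ico a b) :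
    L < f u := by
  obtain ⟨v, huv, hvb⟩ := exists_between hu.2
  have hv : v ∈ Ico a b := ⟨hu.1.trans huv.le, hvb⟩
  refine lt_of_le_of_lt (le_of_tendsto hL ?_) (hf hu hv huv)
  filter_upwards [Ioo_mem_nhdsLT hvb] with w hw
  exact (hf hv ⟨hv.1.trans hw.1.le, hw.2⟩ hw.1).le

lemma profileGap_bounds {l α u : ℝ} (hl : 1 < l) (hα2 : 2 ≤ α) (hα3 : 2 * (1 + l) / 3 ≤ α)
    (hα : l = 2 → 2 < α) (hu0 : 0 < u) (hu1 : u < 1) :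
    log l + (α / l - α) * log 2 < profileGap l α u ∧ profileGap l α u < 0 := by
  have hanti := strictAntiOn_profileGap hl hα2 hα3 hα
  refine ⟨hanti.lt_of_tendsto_nhdsLT (tendsto_profileGap (by linarith) α) ⟨hu0.le, hu1⟩, ?_⟩
  rw [← profileGap_zero (by linarith : l ≠ 0) α]
  exact hanti ⟨le_rfl, zero_lt_one⟩ ⟨hu0.le, hu1⟩ hu0

/-- With `v = e^{-2rx}`: `cosh (r x) = e^{rx} (1 + v) / 2` and `sinh (r x) = e^{rx} (1 - v) / 2`. -/
lemma log_cosh_rpow_mul_sinh {r x : ℝ} (hr : 0 < r) (hx : 0 < x) (p : ℝ) :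
    log (cosh (r * x) ^ (p / r - 1) * sinh (r * x))
      = p * x - p / r * log 2 + logProfile (p / r) (exp (-(2 * (r * x)))) := by
  have hrx : 0 < r * x := mul_pos hr hx
  set v := exp (-(2 * (r * x)))
  have hv1 : v < 1 := exp_lt_one_iff.2 (by linarith)
  have he : exp (r * x) * v = exp (-(r * x)) := by rw [← exp_add]; ring_nf
  have hlog : ∀ c : ℝ, 0 < c → log (exp (r * x) * c / 2) = r * x + log c - log 2 := fun c hc ↦ by
    rw [log_div (by positivity) two_ne_zero, log_mul (exp_pos _).ne' hc.ne', log_exp]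
  have hc : cosh (r * x) = exp (r * x) * (1 + v) / 2 := by rw [cosh_eq, mul_add, he, mul_one]
  have hs : sinh (r * x) = exp (r * x) * (1 - v) / 2 := by rw [sinh_eq, mul_sub, he, mul_one]
  rw [log_mul (rpow_pos_of_pos (cosh_pos _) _).ne' (sinh_pos_iff.2 hrx).ne',
    log_rpow (cosh_pos _), hc, hs, hlog _ (by positivity), hlog _ (by linarith), logProfile]
  field_simp
  ring

lemma cosh_rpow_mul_sinh_bounds {s t p x : ℝ} (h0s : 0 < s) (hst : s < t)
    (hpge : max (2 * s) (2 / 3 * (s + t)) ≤ p) (hexc : t = 2 * s → 2 * s < p) (hx : 0 < x) :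
    2 ^ (p / t) * (cosh (t * x) ^ (p / t - 1) * sinh (t * x))
        < 2 ^ (p / s) * (cosh (s * x) ^ (p / s - 1) * sinh (s * x)) ∧
      t * (cosh (s * x) ^ (p / s - 1) * sinh (s * x))
        < s * (cosh (t * x) ^ (p / t - 1) * sinh (t * x)) := by
  have h0t : 0 < t := h0s.trans hst
  obtain ⟨hp2s, hp23⟩ := max_le_iff.1 hpge
  have hl : 1 < t / s := (one_lt_div h0s).2 hst
  have hα2 : 2 ≤ p / s := (le_div_iff₀ h0s).2 (by linarith)
  have hα3 : 2 * (1 + t / s) / 3 ≤ p / s := by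
    rw [le_div_iff₀ h0s]; field_simp; linarith
  have hα : t / s = 2 → 2 < p / s := fun h ↦
    (lt_div_iff₀ h0s).2 (by linarith [hexc ((div_eq_iff h0s.ne').1 h)])
  obtain ⟨hlo, hhi⟩ := profileGap_bounds hl hα2 hα3 hα (u := exp (-(2 * (s * x))))
    (exp_pos _) (exp_lt_one_iff.2 (by nlinarith))
  rw [profileGap, ← exp_mul, show -(2 * (s * x)) * (t / s) = -(2 * (t * x)) by field_simp,
    show p / s / (t / s) = p / t by field_simp] at hlo hhi
  rw [log_div h0t.ne' h0s.ne'] at hlo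
  have hσ : ∀ r, 0 < r → 0 < cosh (r * x) ^ (p / r - 1) * sinh (r * x) := fun r hr ↦
    mul_pos (rpow_pos_of_pos (cosh_pos _) _) (sinh_pos_iff.2 (mul_pos hr hx))
  have hlog : ∀ c r : ℝ, 0 < c → 0 < r → log (c * (cosh (r * x) ^ (p / r - 1) * sinh (r * x)))
      = log c + p * x - p / r * log 2 + logProfile (p / r) (exp (-(2 * (r * x)))) :=
    fun c r hc hr ↦ by rw [log_mul hc.ne' (hσ r hr).ne', log_cosh_rpow_mul_sinh hr hx]; ring
  constructor
  · rw [← log_lt_log_iff (mul_pos (by positivity) (hσ t h0t)) (mul_pos (by positivity) (hσ s h0s)),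
      hlog _ t (by positivity) h0t, hlog _ s (by positivity) h0s, log_rpow two_pos,
      log_rpow two_pos]
    linarith
  · rw [← log_lt_log_iff (mul_pos h0t (hσ s h0s)) (mul_pos h0s (hσ t h0t)), hlog t s h0t h0s,
      hlog s t h0s h0t]
    linarith

lemma hasDerivAt_cosh_mul_rpow {r : ℝ} (hr : r ≠ 0) (p x : ℝ) :
    HasDerivAt (fun y ↦ cosh (r * y) ^ (p / r))
      (p * (cosh (r * x) ^ (p / r - 1) * sinh (r * x))) x :=
  ((hasDerivAt_cosh_mul r x).rpow_const (Or.inl (cosh_pos _).ne')).congr_deriv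
    (by field_simp)

lemma cosh_rpow_sub_one_bounds {s t p y : ℝ} (h0s : 0 < s) (hst : s < t)
    (hpge : max (2 * s) (2 / 3 * (s + t)) ≤ p) (hexc : t = 2 * s → 2 * s < p) (hy : 0 < y) :
    2 ^ (p / t) * (cosh (t * y) ^ (p / t) - 1) < 2 ^ (p / s) * (cosh (s * y) ^ (p / s) - 1) ∧
      t * (cosh (s * y) ^ (p / s) - 1) < s * (cosh (t * y) ^ (p / t) - 1) := by
  have h0t : 0 < t := h0s.trans hst
  have hp : 0 < p := by linarith [le_max_left (2 * s) (2 / 3 * (s + t))]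
  have hd : ∀ c r, r ≠ 0 → ∀ x, HasDerivAt (fun y ↦ c * (cosh (r * y) ^ (p / r) - 1))
      (c * (p * (cosh (r * x) ^ (p / r - 1) * sinh (r * x)))) x := fun c r hr x ↦
    ((hasDerivAt_cosh_mul_rpow hr p x).sub_const 1).const_mul c
  constructor
  · refine lt_of_hasDerivAt_lt hy (hd _ t h0t.ne') (hd _ s h0s.ne') (fun x hx ↦ ?_) (by simp)
    linarith [mul_lt_mul_of_pos_left (cosh_rpow_mul_sinh_bounds h0s hst hpge hexc hx.1).1 hp]
  · refine lt_of_hasDerivAt_lt hy (hd _ s h0s.ne') (hd _ t h0t.ne') (fun x hx ↦ ?_) (by simp)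
    linarith [mul_lt_mul_of_pos_left (cosh_rpow_mul_sinh_bounds h0s hst hpge hexc hx.1).2 hp]

lemma cosh_rpow_ratio_bounds {s t p y : ℝ} (h0s : 0 < s) (hst : s < t)
    (hpge : max (2 * s) (2 / 3 * (s + t)) ≤ p) (hexc : t = 2 * s → 2 * s < p) (hy : y ≠ 0) :
    2 ^ (p / t - p / s) < (cosh (s * y) ^ (p / s) - 1) / (cosh (t * y) ^ (p / t) - 1) ∧
      (cosh (s * y) ^ (p / s) - 1) / (cosh (t * y) ^ (p / t) - 1) < s / t := by
  have h0t : 0 < t := h0s.trans hst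
  have hp : 0 < p := by linarith [le_max_left (2 * s) (2 / 3 * (s + t))]
  have habs : ∀ r, 0 < r → cosh (r * |y|) = cosh (r * y) := fun r hr ↦ by
    rw [← cosh_abs (r * y), abs_mul, abs_of_pos hr]
  obtain ⟨hlo, hhi⟩ := cosh_rpow_sub_one_bounds h0s hst hpge hexc (abs_pos.2 hy)
  rw [habs s h0s, habs t h0t] at hlo hhi
  have hden : 0 < cosh (t * y) ^ (p / t) - 1 :=
    sub_pos.2 (one_lt_rpow (one_lt_cosh.2 (mul_ne_zero h0t.ne' hy)) (div_pos hp h0t))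
  rw [rpow_sub two_pos, div_lt_div_iff₀ (rpow_pos_of_pos two_pos _) hden,
    div_lt_div_iff₀ hden h0t]
  constructor <;> linarith

lemma powerMean_mul_exp_rpow {m r : ℝ} (hm : 0 < m) (hr : r ≠ 0) (y p : ℝ) :
    powerMean r (m * exp y) (m * exp (-y)) ^ p = m ^ p * cosh (r * y) ^ (p / r) := by
  have hsum : ((m * exp y) ^ r + (m * exp (-y)) ^ r) / 2 = m ^ r * cosh (r * y) := by
    rw [mul_rpow hm.le (exp_pos _).le, mul_rpow hm.le (exp_pos _).le, ← exp_mul, ← exp_mul,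
      cosh_eq]
    ring_nf
  rw [powerMean, hsum, ← rpow_mul (by positivity), mul_rpow (by positivity) (cosh_pos _).le,
    ← rpow_mul hm.le, one_div_mul_eq_div, mul_div_cancel₀ _ hr]

lemma geomMean_mul_exp {m : ℝ} (hm : 0 ≤ m) (y : ℝ) :
    geomMean (m * exp y) (m * exp (-y)) = m := by
  rw [geomMean, show m * exp y * (m * exp (-y)) = m ^ 2 by
    rw [mul_mul_mul_comm, ← exp_add, add_neg_cancel, exp_zero, mul_one, sq], sqrt_sq hm]

lemma exists_eq_mul_exp {a b : ℝ} (ha : 0 < a) (hb : 0 < b) :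
    ∃ m y, 0 < m ∧ a = m * exp y ∧ b = m * exp (-y) :=
  ⟨exp ((log a + log b) / 2), (log a - log b) / 2, exp_pos _,
    by rw [← exp_add, show (log a + log b) / 2 + (log a - log b) / 2 = log a by ring, exp_log ha],
    by rw [← exp_add, show (log a + log b) / 2 + -((log a - log b) / 2) = log b by ring,
      exp_log hb]⟩

theorem ratio_bounds_pos_large_p (s t p : ℝ)
    (h0s : 0 < s) (hst : s < t)
    (hpge : max (2 * s) (2 / 3 * (s + t)) ≤ p)
    (hexc : t = 2 * s → 2 * s < p) :
    ∀ a b : ℝ, 0 < a → 0 < b → a ≠ b →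
      (2 : ℝ) ^ (p / t - p / s) <
        (powerMean s a b ^ p - geomMean a b ^ p) /
          (powerMean t a b ^ p - geomMean a b ^ p) ∧
      (powerMean s a b ^ p - geomMean a b ^ p) /
          (powerMean t a b ^ p - geomMean a b ^ p) < s / t := by
  intro a b ha hb hab
  obtain ⟨m, y, hm, rfl, rfl⟩ := exists_eq_mul_exp ha hb
  have hy : y ≠ 0 := by rintro rfl; simp at hab
  rw [powerMean_mul_exp_rpow hm h0s.ne', powerMean_mul_exp_rpow hm (h0s.trans hst).ne',
    geomMean_mul_exp hm.le, ← mul_sub_one, ← mul_sub_one,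
    mul_div_mul_left _ _ (rpow_pos_of_pos hm p).ne']
  exact cosh_rpow_ratio_bounds h0s hst hpge hexc hy
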